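/- Maximal permissiveness of S_CA: if some supervisor S satisfies L_a(S^a/G) = K, then the state-estimate-based supervisor S_CA (which disables exactly the events that could lead out of K from some state consistent with the observation) also satisfies L_a(S_CA^a/G) = K, and for every supervisor S' with L_a(S'^a/G) = K and every observation t ∈ Φ^π(K), S'(t) ⊆ S_CA(t). -/

import Mathlib

/-!
A supervisor `S` with `L_a(S^a/G) = K` never enables, at an observation `t`, an event that
leads out of `K` from some `s' ∈ K` with `t ∈ Φ^π(s')`; so `S(t)` avoids `η(t)` and hence
`S ⊆ S_CA` on `Φ^π(K)`, which gives `K ⊆ L_a(S_CA^a/G)` by monotonicity of the large language.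
Conversely every event enabled by `S_CA` from a string of `K` is either outside `η(t)` or
uncontrollable, and `K = L_a(S^a/G)` is closed under both kinds of steps.
-/

/-- The large language `L_a(S^a/G)` of the supervised system under cyber attacks,
with enabling condition `σ ∈ Euc ∪ Eca ∨ ∃ t ∈ Φ s, σ ∈ S t`. -/
inductive LargeLang {α : Type*} (LG : Set (List α)) (Euc Eca : Set α)
    (Φ : List α → Set (List α)) (S : List α → Set α) : List α → Prop
  | nil : LargeLang LG Euc Eca Φ S []
  | snoc (s : List α) (σ : α) :
      LargeLang LG Euc Eca Φ S s → s ++ [σ] ∈ LG →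
      (σ ∈ Euc ∪ Eca ∨ ∃ t ∈ Φ s, σ ∈ S t) →
      LargeLang LG Euc Eca Φ S (s ++ [σ])

namespace LargeLang

variable {α : Type*} {LG K : Set (List α)} {Euc Eca : Set α} {Φ : List α → Set (List α)}
  {S T : List α → Set α}

theorem mono (h : ∀ s, LargeLang LG Euc Eca Φ S s → ∀ t ∈ Φ s, S t ⊆ T t) {s : List α}
    (hs : LargeLang LG Euc Eca Φ S s) : LargeLang LG Euc Eca Φ T s := by
  induction hs with
  | nil => exact nil
  | snoc s σ hs hLσ hen ih =>
    refine snoc s σ ih hLσ (hen.imp_right ?_)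
    rintro ⟨t, ht, hσ⟩
    exact ⟨t, ht, h s hs t ht hσ⟩

theorem snoc_mem_of_enabled (hS : {s | LargeLang LG Euc Eca Φ S s} = K) {s : List α} {σ : α}
    (hs : s ∈ K) (hLσ : s ++ [σ] ∈ LG) (hen : σ ∈ Euc ∪ Eca ∨ ∃ t ∈ Φ s, σ ∈ S t) :
    s ++ [σ] ∈ K := by
  rw [← hS] at hs ⊢
  exact snoc s σ hs hLσ hen

theorem mem_of_forall_snoc_mem (hS : {s | LargeLang LG Euc Eca Φ S s} = K)
    (hT : ∀ s ∈ K, ∀ t ∈ Φ s, ∀ σ ∈ T t, s ++ [σ] ∈ LG → s ++ [σ] ∈ K) {s : List α}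
    (hs : LargeLang LG Euc Eca Φ T s) : s ∈ K := by
  induction hs with
  | nil => exact hS ▸ nil
  | snoc s σ _ hLσ hen ih =>
    rcases hen with hσ | ⟨t, ht, hσ⟩
    · exact snoc_mem_of_enabled hS ih hLσ (Or.inl hσ)
    · exact hT s ih t ht σ hσ hLσ

end LargeLang

open Classical in
theorem stmt_18_general {α : Type*} (LG K : Set (List α)) (Euc Eca : Set α)
    (Φ : List α → Set (List α))
    (η : List α → Set α)
    (hη : ∀ t : List α,
      η t = {σ : α | ∃ s' ∈ K, t ∈ Φ s' ∧ s' ++ [σ] ∈ LG ∧ s' ++ [σ] ∉ K})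
    (SCA : List α → Set α)
    (hSCA : ∀ t : List α,
      SCA t = if t ∈ ⋃ s ∈ K, Φ s then (η t)ᶜ ∪ Euc else Euc)
    (hsol : ∃ S : List α → Set α,
      {s : List α | LargeLang LG Euc Eca Φ S s} = K) :
    {s : List α | LargeLang LG Euc Eca Φ SCA s} = K ∧
      ∀ S' : List α → Set α,
        {s : List α | LargeLang LG Euc Eca Φ S' s} = K →
          ∀ t ∈ ⋃ s ∈ K, Φ s, S' t ⊆ SCA t := by
  obtain ⟨S, hS⟩ := hsol
  have hmax : ∀ S' : List α → Set α, {s | LargeLang LG Euc Eca Φ S' s} = K →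
      ∀ t ∈ ⋃ s ∈ K, Φ s, S' t ⊆ SCA t := by
    intro S' hS' t htK σ hσ
    rw [hSCA t, if_pos htK, hη t]
    exact Or.inl fun ⟨s', hs', ht, hLσ, hσK⟩ =>
      hσK (LargeLang.snoc_mem_of_enabled hS' hs' hLσ (Or.inr ⟨t, ht, hσ⟩))
  have hSCA_safe : ∀ s ∈ K, ∀ t ∈ Φ s, ∀ σ ∈ SCA t, s ++ [σ] ∈ LG → s ++ [σ] ∈ K := by
    intro s hs t ht σ hσ hLσ
    rw [hSCA t, if_pos (Set.mem_biUnion hs ht), hη t] at hσ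
    rcases hσ with hσ | hσ
    · by_contra hσK
      exact hσ ⟨s, hs, ht, hLσ, hσK⟩
    · exact LargeLang.snoc_mem_of_enabled hS hs hLσ (Or.inl (Or.inl hσ))
  refine ⟨Set.Subset.antisymm (fun s => LargeLang.mem_of_forall_snoc_mem hS hSCA_safe) ?_, hmax⟩
  intro s hs
  rw [← hS] at hs
  refine LargeLang.mono (fun s' hs' t ht => hmax S hS t ?_) hs
  exact Set.mem_biUnion (hS ▸ hs' : s' ∈ K) ht

open Classical in
/-- Maximal permissiveness of `S_CA`: if some supervisor solves the
problem, then `S_CA` solves it too, and every solution supervisor `S'` is pointwise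
less permissive than `S_CA` on observations in `Φ^π(K)`. -/
theorem stmt_18 {α : Type*} (LG K : Set (List α)) (Euc Eca : Set α)
    (Φ : List α → Set (List α))
    (hKL : K ⊆ LG) (hKne : K.Nonempty)
    (hK : ∀ s ∈ K, ∀ s' : List α, s' <+: s → s' ∈ K)
    (hLG : ∀ s ∈ LG, ∀ s' : List α, s' <+: s → s' ∈ LG)
    (hΦne : ∀ s ∈ LG, (Φ s).Nonempty)
    (η : List α → Set α)
    (hη : ∀ t : List α,
      η t = {σ : α | ∃ s' ∈ K, t ∈ Φ s' ∧ s' ++ [σ] ∈ LG ∧ s' ++ [σ] ∉ K})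
    (SCA : List α → Set α)
    (hSCA : ∀ t : List α,
      SCA t = if t ∈ ⋃ s ∈ K, Φ s then (η t)ᶜ ∪ Euc else Euc)
    (hsol : ∃ S : List α → Set α,
      {s : List α | LargeLang LG Euc Eca Φ S s} = K) :
    {s : List α | LargeLang LG Euc Eca Φ SCA s} = K ∧
      ∀ S' : List α → Set α,
        {s : List α | LargeLang LG Euc Eca Φ S' s} = K →
          ∀ t ∈ ⋃ s ∈ K, Φ s, S' t ⊆ SCA t :=
  stmt_18_general LG K Euc Eca Φ η hη SCA hSCA hsol
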